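/- Let ε be a standard Gaussian random variable and ζ ~ N(0, I_n) independent of ε, with t(u) = a‖u‖/2 + σ²·log(p/s−1)/(a‖u‖) for a, σ > 0, s < p/2. Then s·P({σε ≥ a‖ζ‖ − t(ζ)} ∩ {a‖ζ‖ ≥ t(ζ)}) ≤ √(s(p−s))·exp(−(n/2)·log(1 + a²/(4σ²))). -/

import Mathlib

/-!
Condition on `ζ` and write `r = a‖ζ‖`, `L = log (p/s - 1)`, `t = r/2 + σ²L/r`. The event forces
`ε ≥ (r - t)/σ ≥ 0`, and `((r - t)/σ)²/2 = r²/(8σ²) - L/2 + (σL/r)²/2`, so the Chernoff bound for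
the standard Gaussian bounds the conditional probability by `√(p/s - 1) · exp (-a²‖ζ‖²/(8σ²))`.
Averaging over `ζ ~ N(0, Iₙ)` uses `E exp (-c‖ζ‖²) = (1 + 2c)^(-n/2)` with `c = a²/(8σ²)`, and
finally `s √(p/s - 1) = √(s(p - s))`.
-/

open MeasureTheory ProbabilityTheory Real

lemma gaussianReal_Ici_le_exp {y : ℝ} (hy : 0 ≤ y) :
    gaussianReal 0 1 {x | y ≤ x} ≤ ENNReal.ofReal (exp (-y ^ 2 / 2)) := by
  rw [ENNReal.le_ofReal_iff_toReal_le (measure_ne_top _ _) (exp_nonneg _), ← measureReal_def]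
  refine (measure_ge_le_exp_mul_mgf (X := id) y hy
    (integrable_exp_mul_gaussianReal y)).trans_eq ?_
  rw [mgf_id_gaussianReal, ← exp_add]
  congr 1
  push_cast
  ring

/-- For `c ≤ -1/2` both sides are junk `0`. -/
lemma integral_exp_neg_mul_sq_gaussianReal (c : ℝ) :
    ∫ x, exp (-c * x ^ 2) ∂gaussianReal 0 1 = 1 / √(1 + 2 * c) := by
  have hdensity (x : ℝ) : gaussianPDFReal 0 1 x • exp (-c * x ^ 2)
      = (√(2 * π))⁻¹ * exp (-(c + 1 / 2) * x ^ 2) := by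
    rw [gaussianPDFReal, smul_eq_mul, mul_assoc, ← exp_add]
    push_cast
    ring_nf
  simp_rw [integral_gaussianReal_eq_integral_smul one_ne_zero, hdensity, integral_const_mul,
    integral_gaussian]
  rw [show c + 1 / 2 = (1 + 2 * c) / 2 by ring, div_div_eq_mul_div, mul_comm π,
    sqrt_div (by positivity)]
  have : √(2 * π) ≠ 0 := by positivity
  field_simp

lemma integral_exp_neg_mul_sum_sq_pi_gaussianReal (n : ℕ) (c : ℝ) :
    ∫ v : Fin n → ℝ, exp (-c * ∑ i, v i ^ 2) ∂(Measure.pi fun _ => gaussianReal 0 1)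
      = (1 / √(1 + 2 * c)) ^ n := by
  have hprod := integral_fintype_prod_eq_pow (ι := Fin n) (fun x => exp (-c * x ^ 2))
    (μ := gaussianReal 0 1)
  rw [Fintype.card_fin, integral_exp_neg_mul_sq_gaussianReal] at hprod
  simpa only [← exp_sum, Finset.mul_sum] using hprod

lemma lintegral_exp_neg_mul_sum_sq_pi_gaussianReal (n : ℕ) {c : ℝ} (hc : 0 ≤ c) :
    ∫⁻ v : Fin n → ℝ, ENNReal.ofReal (exp (-c * ∑ i, v i ^ 2))
        ∂(Measure.pi fun _ => gaussianReal 0 1)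
      = ENNReal.ofReal ((1 / √(1 + 2 * c)) ^ n) := by
  have hint : Integrable (fun v : Fin n → ℝ => exp (-c * ∑ i, v i ^ 2))
      (Measure.pi fun _ => gaussianReal 0 1) := by
    refine .of_bound (Measurable.aestronglyMeasurable (by fun_prop)) 1 (ae_of_all _ fun v => ?_)
    rw [norm_of_nonneg (exp_nonneg _), exp_le_one_iff]
    have : 0 ≤ ∑ i, v i ^ 2 := by positivity
    nlinarith
  rw [← ofReal_integral_eq_lintegral_ofReal hint (ae_of_all _ fun _ => exp_nonneg _),
    integral_exp_neg_mul_sum_sq_pi_gaussianReal]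

lemma measure_preimage_prodMk_eq_lintegral {Ω α β : Type*} [MeasurableSpace Ω]
    [MeasurableSpace α] [MeasurableSpace β] {P : Measure Ω} [IsFiniteMeasure P]
    {X : Ω → α} {Y : Ω → β} (hX : Measurable X) (hY : Measurable Y) (hXY : IndepFun X Y P)
    {S : Set (α × β)} (hS : MeasurableSet S) :
    P ((fun ω => (X ω, Y ω)) ⁻¹' S) = ∫⁻ x, P.map Y (Prod.mk x ⁻¹' S) ∂P.map X := by
  rw [← Measure.map_apply (hX.prodMk hY) hS,
    (indepFun_iff_map_prod_eq_prod_map_map hX.aemeasurable hY.aemeasurable).mp hXY,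
    Measure.prod_apply hS]

lemma sq_div_sub_half_le_sq_threshold_gap {r σ L : ℝ} (hr : 0 < r) (hσ : 0 < σ) :
    r ^ 2 / (8 * σ ^ 2) - L / 2 ≤ ((r - (r / 2 + σ ^ 2 * L / r)) / σ) ^ 2 / 2 := by
  have hexpand : ((r - (r / 2 + σ ^ 2 * L / r)) / σ) ^ 2 / 2
      = r ^ 2 / (8 * σ ^ 2) - L / 2 + (σ * L / r) ^ 2 / 2 := by
    field_simp
    ring
  rw [hexpand]
  linarith [sq_nonneg (σ * L / r)]

lemma gaussianReal_threshold_event_le {r σ L : ℝ} (hr : 0 ≤ r) (hσ : 0 < σ) (hL : 0 ≤ L) :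
    gaussianReal 0 1 {x | r - (r / 2 + σ ^ 2 * L / r) ≤ σ * x ∧ r / 2 + σ ^ 2 * L / r ≤ r}
      ≤ ENNReal.ofReal (exp (L / 2 - r ^ 2 / (8 * σ ^ 2))) := by
  set t := r / 2 + σ ^ 2 * L / r
  by_cases ht : t ≤ r
  · rcases hr.eq_or_lt with rfl | hr
    · -- `t = 0` here, by `x / 0 = 0`.
      refine prob_le_one.trans ?_
      simpa using one_le_exp (by positivity : 0 ≤ L / 2)
    have hsub : {x | r - t ≤ σ * x ∧ t ≤ r} ⊆ {x | (r - t) / σ ≤ x} := fun x hx => by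
      rw [Set.mem_ofPred_eq, div_le_iff₀ hσ, mul_comm]
      exact hx.1
    refine (measure_mono hsub).trans <|
      (gaussianReal_Ici_le_exp (div_nonneg (sub_nonneg.2 ht) hσ.le)).trans ?_
    gcongr
    linarith [sq_div_sub_half_le_sq_threshold_gap (L := L) hr hσ]
  · simp [ht]

lemma mul_exp_half_log_div_sub_one {s p : ℝ} (hs : 0 < s) (hsp : s < p) :
    s * exp (log (p / s - 1) / 2) = √(s * (p - s)) := by
  have hps : 0 < p / s - 1 := by rw [sub_pos, one_lt_div hs]; exact hsp
  rw [exp_half, exp_log hps, show s * (p - s) = s ^ 2 * (p / s - 1) by field_simp,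
    sqrt_mul (sq_nonneg s), sqrt_sq hs.le]

lemma one_div_sqrt_pow_eq_exp {K : ℝ} (hK : 0 < K) (n : ℕ) :
    (1 / √K) ^ n = exp (-((n : ℝ) / 2) * log K) := by
  rw [show -((n : ℝ) / 2) * log K = n * (-log K / 2) by ring, exp_nat_mul, exp_half, exp_neg,
    exp_log hK, sqrt_inv, one_div]

theorem psi_second_term_bound_general
    {Ω : Type*} [MeasurableSpace Ω] (P : Measure Ω) [IsProbabilityMeasure P]
    (n : ℕ) (ε : Ω → ℝ) (ζ : Ω → Fin n → ℝ)
    (hεm : Measurable ε) (hζm : Measurable ζ)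
    (hε : Measure.map ε P = gaussianReal 0 1)
    (hζ : Measure.map ζ P = Measure.pi fun _ => gaussianReal 0 1)
    (hindep : IndepFun ε ζ P)
    (a σ : ℝ) (ha : 0 < a) (hσ : 0 < σ)
    (s p : ℕ) (hs : 0 < s) (hsp : (s : ℝ) < (p : ℝ) / 2) :
    (s : ℝ) *
        (P {ω |
            (a * Real.sqrt (∑ i, (ζ ω i) ^ 2)
                - (a * Real.sqrt (∑ i, (ζ ω i) ^ 2) / 2
                    + σ ^ 2 * Real.log ((p : ℝ) / (s : ℝ) - 1)
                        / (a * Real.sqrt (∑ i, (ζ ω i) ^ 2)))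
              ≤ σ * ε ω)
            ∧ (a * Real.sqrt (∑ i, (ζ ω i) ^ 2) / 2
                + σ ^ 2 * Real.log ((p : ℝ) / (s : ℝ) - 1)
                    / (a * Real.sqrt (∑ i, (ζ ω i) ^ 2))
              ≤ a * Real.sqrt (∑ i, (ζ ω i) ^ 2))}).toReal
      ≤ Real.sqrt ((s : ℝ) * ((p : ℝ) - s)) *
          Real.exp (-((n : ℝ) / 2) * Real.log (1 + a ^ 2 / (4 * σ ^ 2))) := by
  have hs0 : (0 : ℝ) < s := by exact_mod_cast hs
  have hsp' : (s : ℝ) < p := by linarith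
  set L := log ((p : ℝ) / s - 1)
  have hL : 0 ≤ L := log_nonneg (by rw [le_sub_iff_add_le, le_div_iff₀ hs0]; linarith)
  set c := a ^ 2 / (8 * σ ^ 2) with hc
  set r : (Fin n → ℝ) → ℝ := fun v => a * √(∑ i, v i ^ 2)
  set S := {q : (Fin n → ℝ) × ℝ |
    r q.1 - (r q.1 / 2 + σ ^ 2 * L / r q.1) ≤ σ * q.2 ∧ r q.1 / 2 + σ ^ 2 * L / r q.1 ≤ r q.1}
  have hS : MeasurableSet S := by measurability
  have hslice (v : Fin n → ℝ) : gaussianReal 0 1 (Prod.mk v ⁻¹' S)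
      ≤ ENNReal.ofReal (exp (L / 2)) * ENNReal.ofReal (exp (-c * ∑ i, v i ^ 2)) := by
    refine (gaussianReal_threshold_event_le (r := r v) (by positivity) hσ hL).trans_eq ?_
    rw [← ENNReal.ofReal_mul (exp_nonneg _), ← exp_add, mul_pow, sq_sqrt (by positivity), hc]
    ring_nf
  have hprob : P ((fun ω => (ζ ω, ε ω)) ⁻¹' S)
      ≤ ENNReal.ofReal (exp (L / 2) * (1 / √(1 + 2 * c)) ^ n) := by
    rw [measure_preimage_prodMk_eq_lintegral hζm hεm hindep.symm hS, hε, hζ,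
      ENNReal.ofReal_mul (exp_nonneg _),
      ← lintegral_exp_neg_mul_sum_sq_pi_gaussianReal n (by positivity : 0 ≤ c),
      ← lintegral_const_mul' _ _ ENNReal.ofReal_ne_top]
    exact lintegral_mono hslice
  calc (s : ℝ) * (P ((fun ω => (ζ ω, ε ω)) ⁻¹' S)).toReal
      ≤ s * (exp (L / 2) * (1 / √(1 + 2 * c)) ^ n) := by
        gcongr
        exact ENNReal.toReal_le_of_le_ofReal (by positivity) hprob
    _ = _ := by
        rw [← mul_assoc, mul_exp_half_log_div_sub_one hs0 hsp',
          one_div_sqrt_pow_eq_exp (by positivity), hc]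
        ring_nf

/-- Bound on the second term `s·P({σε ≥ a‖ζ‖ − t(ζ)} ∩ {a‖ζ‖ ≥ t(ζ)})` of `ψ`,
where `t(u) = a‖u‖/2 + σ²log(p/s−1)/(a‖u‖)`, `ε` standard Gaussian and `ζ` an
independent standard Gaussian vector in `ℝⁿ`. -/
theorem psi_second_term_bound
    {Ω : Type*} [MeasurableSpace Ω] (P : Measure Ω) [IsProbabilityMeasure P]
    (n : ℕ) (hn : 0 < n) (ε : Ω → ℝ) (ζ : Ω → Fin n → ℝ)
    (hεm : Measurable ε) (hζm : Measurable ζ)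
    (hε : Measure.map ε P = gaussianReal 0 1)
    (hζ : Measure.map ζ P = Measure.pi fun _ => gaussianReal 0 1)
    (hindep : IndepFun ε ζ P)
    (a σ : ℝ) (ha : 0 < a) (hσ : 0 < σ)
    (s p : ℕ) (hs : 0 < s) (hsp : (s : ℝ) < (p : ℝ) / 2) :
    (s : ℝ) *
        (P {ω |
            (a * Real.sqrt (∑ i, (ζ ω i) ^ 2)
                - (a * Real.sqrt (∑ i, (ζ ω i) ^ 2) / 2
                    + σ ^ 2 * Real.log ((p : ℝ) / (s : ℝ) - 1)
                        / (a * Real.sqrt (∑ i, (ζ ω i) ^ 2)))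
              ≤ σ * ε ω)
            ∧ (a * Real.sqrt (∑ i, (ζ ω i) ^ 2) / 2
                + σ ^ 2 * Real.log ((p : ℝ) / (s : ℝ) - 1)
                    / (a * Real.sqrt (∑ i, (ζ ω i) ^ 2))
              ≤ a * Real.sqrt (∑ i, (ζ ω i) ^ 2))}).toReal
      ≤ Real.sqrt ((s : ℝ) * ((p : ℝ) - s)) *
          Real.exp (-((n : ℝ) / 2) * Real.log (1 + a ^ 2 / (4 * σ ^ 2))) :=
  psi_second_term_bound_general P n ε ζ hεm hζm hε hζ hindep a σ ha hσ s p hs hsp
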